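/- In the d-regular tree T_d: (a) every domain D with |D| ≤ d is isoperimetrically optimal, and (b) every domain D with |D| ≥ 2 and |R(D)| ≤ 1 (in particular every full domain) is isoperimetrically optimal. -/
import Mathlib


/-- Inner vertex boundary of a finite vertex set `D`: vertices of `D` having a neighbor
outside `D`. -/
noncomputable def innerBoundary {V : Type*} (G : SimpleGraph V) (D : Finset V) : Finset V := by
  classical exact D.filter (fun x => ∃ y, y ∉ D ∧ G.Adj x y)

/-- Outer vertex boundary of `D`: vertices outside `D` having a neighbor in `D`. -/
def outerBoundary {V : Type*} (G : SimpleGraph V) (D : Finset V) : Set V :=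
  {y | y ∉ D ∧ ∃ x ∈ D, G.Adj x y}

/-- Number of neighbors of `x` lying in `D`. -/
noncomputable def degIn {V : Type*} (G : SimpleGraph V) (D : Finset V) (x : V) : ℕ := by
  classical exact (D.filter (fun y => G.Adj x y)).card

/-- A domain: a finite nonempty vertex set whose induced subgraph is connected. -/
def IsGraphDomain {V : Type*} (G : SimpleGraph V) (D : Finset V) : Prop :=
  D.Nonempty ∧ (G.induce (↑D : Set V)).Connected

/-- `G` is a `d`-regular tree: connected, acyclic, and every vertex has degree `d`. -/
def IsRegularTree {V : Type*} (G : SimpleGraph V) (d : ℕ) : Prop :=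
  G.Connected ∧ G.IsAcyclic ∧ ∀ v : V, (G.neighborSet v).ncard = d

/-- Boundary branching excess `τ(D) = Σ_{x ∈ ∂D} (deg_D(x) − 1)`. -/
noncomputable def tauD {V : Type*} (G : SimpleGraph V) (D : Finset V) : ℕ :=
  ∑ x ∈ innerBoundary G D, (degIn G D x - 1)

/-- Residual boundary `R(D) = {x ∈ ∂D : deg_D(x) ≥ 2}`. -/
noncomputable def residualBoundary {V : Type*} (G : SimpleGraph V) (D : Finset V) : Finset V := by
  classical exact (innerBoundary G D).filter (fun x => 2 ≤ degIn G D x)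

/-- `D` is isoperimetrically optimal: its inner boundary is smallest among all domains
of the same cardinality. -/
def IsOptimal {V : Type*} (G : SimpleGraph V) (D : Finset V) : Prop :=
  ∀ D' : Finset V, IsGraphDomain G D' → D'.card = D.card →
    (innerBoundary G D).card ≤ (innerBoundary G D').card

section aux
variable {V : Type*} {d : ℕ} {T : SimpleGraph V} {D : Finset V} {x : V}

lemma mem_innerBoundary' {G : SimpleGraph V} :
    x ∈ innerBoundary G D ↔ x ∈ D ∧ ∃ y, y ∉ D ∧ G.Adj x y := by
  simp [innerBoundary]

lemma innerBoundary_subset (G : SimpleGraph V) (D : Finset V) :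
    innerBoundary G D ⊆ D := fun x hx => (mem_innerBoundary'.mp hx).1

lemma degIn_def (G : SimpleGraph V) (D : Finset V) (x : V)
    [DecidablePred fun y => G.Adj x y] :
    degIn G D x = (D.filter (fun y => G.Adj x y)).card := by
  unfold degIn; congr 1; apply Finset.filter_congr_decidable

lemma nbhd_finite (hT : IsRegularTree T d) (hd : 2 ≤ d) (x : V) :
    (T.neighborSet x).Finite := by
  by_contra h
  have h0 : (T.neighborSet x).ncard = 0 := Set.Infinite.ncard h
  rw [hT.2.2 x] at h0; omega

lemma filter_subset_nbhd (hT : IsRegularTree T d) (hd : 2 ≤ d)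
    [DecidablePred fun y => T.Adj x y] :
    D.filter (fun y => T.Adj x y) ⊆ (nbhd_finite hT hd x).toFinset := by
  intro y hy
  simp only [Set.Finite.mem_toFinset, SimpleGraph.mem_neighborSet]
  exact (Finset.mem_filter.mp hy).2

lemma nbhd_card (hT : IsRegularTree T d) (hd : 2 ≤ d) (x : V) :
    (nbhd_finite hT hd x).toFinset.card = d := by
  rw [← Set.ncard_eq_toFinset_card _ (nbhd_finite hT hd x)]
  exact hT.2.2 x

lemma degIn_le (hT : IsRegularTree T d) (hd : 2 ≤ d) :
    degIn T D x ≤ d := by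
  classical
  rw [degIn_def, ← nbhd_card hT hd x]
  exact Finset.card_le_card (filter_subset_nbhd hT hd)

lemma mem_innerBoundary_iff (hT : IsRegularTree T d) (hd : 2 ≤ d) :
    x ∈ innerBoundary T D ↔ x ∈ D ∧ degIn T D x < d := by
  classical
  rw [mem_innerBoundary']
  constructor
  · rintro ⟨hxD, y, hyD, hadj⟩
    refine ⟨hxD, ?_⟩
    have hy' : y ∉ D.filter (fun y => T.Adj x y) := by
      simp [Finset.mem_filter, hyD]
    have hsub : insert y (D.filter (fun y => T.Adj x y)) ⊆ (nbhd_finite hT hd x).toFinset := by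
      intro z hz
      rcases Finset.mem_insert.mp hz with rfl | hz
      · simp [Set.Finite.mem_toFinset, hadj]
      · exact filter_subset_nbhd hT hd hz
    have := Finset.card_le_card hsub
    rw [Finset.card_insert_of_notMem hy', nbhd_card hT hd x] at this
    rw [degIn_def]; omega
  · rintro ⟨hxD, hlt⟩
    refine ⟨hxD, ?_⟩
    rw [degIn_def, ← nbhd_card hT hd x] at hlt
    have hne : D.filter (fun y => T.Adj x y) ≠ (nbhd_finite hT hd x).toFinset := by
      intro h; rw [h] at hlt; omega
    obtain ⟨y, hyN, hyf⟩ :=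
      Finset.exists_of_ssubset ((filter_subset_nbhd hT hd).ssubset_of_ne hne)
    have hadj : T.Adj x y := by simpa [Set.Finite.mem_toFinset] using hyN
    refine ⟨y, ?_, hadj⟩
    intro hyD
    exact hyf (Finset.mem_filter.mpr ⟨hyD, hadj⟩)

lemma degIn_of_not_boundary (hT : IsRegularTree T d) (hd : 2 ≤ d)
    (hxD : x ∈ D) (hxb : x ∉ innerBoundary T D) : degIn T D x = d := by
  have h1 := degIn_le (D := D) (x := x) hT hd
  have h2 : ¬ degIn T D x < d := fun h => hxb ((mem_innerBoundary_iff hT hd).mpr ⟨hxD, h⟩)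
  omega

end aux
section handshake
variable {V : Type*} {d : ℕ} {T : SimpleGraph V} {D : Finset V} {x : V}

lemma induce_acyclic (hT : T.IsAcyclic) (s : Set V) : (T.induce s).IsAcyclic := by
  intro v c hc
  exact hT ((c.map (SimpleGraph.Embedding.induce s).toHom)) (hc.map Subtype.val_injective)

lemma degree_induce_eq (D : Finset V) [Fintype ((↑D : Set V))]
    [DecidableRel (T.induce (↑D : Set V)).Adj]
    (v : (↑D : Set V)) :
    (T.induce (↑D : Set V)).degree v = degIn T D ↑v := by
  classical
  rw [degIn_def, ← SimpleGraph.card_neighborFinset_eq_degree]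
  rw [← Finset.card_image_of_injective _ (Subtype.val_injective)]
  congr 1
  ext y
  simp only [Finset.mem_image, SimpleGraph.mem_neighborFinset, Finset.mem_filter,
    SimpleGraph.comap_adj, Function.Embedding.coe_subtype]
  constructor
  · rintro ⟨u, hadj, rfl⟩
    exact ⟨Finset.mem_coe.mp u.2, hadj⟩
  · rintro ⟨hyD, hadj⟩
    exact ⟨⟨y, Finset.mem_coe.mpr hyD⟩, hadj, rfl⟩

lemma sum_degIn (hT : IsRegularTree T d) (hD : IsGraphDomain T D) :
    ∑ x ∈ D, degIn T D x = 2 * (D.card - 1) := by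
  classical
  set G' := T.induce (↑D : Set V) with hG'
  haveI : DecidableEq ((↑D : Set V) : Type _) := Classical.decEq _
  haveI : DecidableRel G'.Adj := Classical.decRel _
  have htree : G'.IsTree := ⟨hD.2, induce_acyclic hT.2.1 _⟩
  have hedges := htree.card_edgeFinset
  have hdeg := SimpleGraph.sum_degrees_eq_twice_card_edges G'
  let e : ((↑D : Set V) : Type _) ≃ {x // x ∈ D} :=
    Equiv.subtypeEquivRight (fun x => Finset.mem_coe)
  have hcardV : Fintype.card ((↑D : Set V) : Type _) = D.card :=
    (Fintype.card_congr e).trans (Fintype.card_coe D)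
  have hsum : ∑ v : ((↑D : Set V) : Type _), G'.degree v = ∑ x ∈ D, degIn T D x := by
    calc ∑ v : ((↑D : Set V) : Type _), G'.degree v
        = ∑ v : ((↑D : Set V) : Type _), degIn T D ↑v :=
          Finset.sum_congr rfl (fun v _ => degree_induce_eq D v)
      _ = ∑ v : {x // x ∈ D}, degIn T D ↑v :=
          Fintype.sum_equiv e _ _ (fun v => rfl)
      _ = ∑ x ∈ D, degIn T D x := Finset.sum_coe_sort D (fun x => degIn T D x)
  rw [hsum] at hdeg
  rw [hcardV] at hedges
  omega

end handshake
section more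
variable {V : Type*} {d : ℕ} {T : SimpleGraph V} {D : Finset V} {x : V}

lemma degIn_pos (hD : IsGraphDomain T D) (h2 : 2 ≤ D.card) (hx : x ∈ D) :
    1 ≤ degIn T D x := by
  classical
  obtain ⟨y, hy, hne⟩ := Finset.exists_mem_ne (s := D) (by omega) x
  have hreach := hD.2.preconnected ⟨x, Finset.mem_coe.mpr hx⟩ ⟨y, Finset.mem_coe.mpr hy⟩
  obtain ⟨p⟩ := hreach
  have hnil : ¬ p.Nil := SimpleGraph.Walk.not_nil_of_ne (by simpa using hne.symm)
  have hadj := p.adj_snd hnil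
  have hmem : (↑(p.getVert 1) : V) ∈ D := Finset.mem_coe.mp (p.getVert 1).2
  have : (↑(p.getVert 1) : V) ∈ D.filter (fun z => T.Adj x z) :=
    Finset.mem_filter.mpr ⟨hmem, hadj⟩
  rw [degIn_def]
  exact Finset.card_pos.mpr ⟨_, this⟩

lemma key_identity (hT : IsRegularTree T d) (hd : 2 ≤ d) (hD : IsGraphDomain T D)
    (h2 : 2 ≤ D.card) :
    tauD T D + (innerBoundary T D).card + D.card * d
      = 2 * (D.card - 1) + (innerBoundary T D).card * d := by
  classical
  set b := (innerBoundary T D).card with hb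
  have hsplit := Finset.sum_filter_add_sum_filter_not D
    (fun x => x ∈ innerBoundary T D) (degIn T D)
  have hfil : D.filter (fun x => x ∈ innerBoundary T D) = innerBoundary T D := by
    ext z
    simp only [Finset.mem_filter, and_iff_right_iff_imp]
    exact fun hz => innerBoundary_subset T D hz
  have hnotsum : ∑ x ∈ D.filter (fun x => x ∉ innerBoundary T D), degIn T D x
      = (D.card - b) * d := by
    rw [Finset.sum_congr rfl (fun z hz => by
      obtain ⟨hzD, hzb⟩ := Finset.mem_filter.mp hz
      exact degIn_of_not_boundary hT hd hzD hzb)]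
    rw [Finset.sum_const, smul_eq_mul]
    congr 1
    have := Finset.card_filter_add_card_filter_not
      (s := D) (p := fun x => x ∈ innerBoundary T D)
    rw [hfil] at this
    omega
  rw [hfil, hnotsum, sum_degIn hT hD] at hsplit
  have hbd : ∑ x ∈ innerBoundary T D, degIn T D x = tauD T D + b := by
    calc ∑ x ∈ innerBoundary T D, degIn T D x
        = ∑ x ∈ innerBoundary T D, ((degIn T D x - 1) + 1) :=
          Finset.sum_congr rfl (fun z hz => by
            have := degIn_pos hD h2 (innerBoundary_subset T D hz); omega)
      _ = (∑ x ∈ innerBoundary T D, (degIn T D x - 1)) + b := by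
          rw [Finset.sum_add_distrib, Finset.sum_const, smul_eq_mul, mul_one]
      _ = tauD T D + b := rfl
  rw [hbd] at hsplit
  have hble : b ≤ D.card := Finset.card_le_card (innerBoundary_subset T D)
  obtain ⟨c, hc⟩ : ∃ c, D.card = b + c := ⟨D.card - b, by omega⟩
  rw [hc] at hsplit ⊢
  have hmul : (b + c) * d = b * d + c * d := by ring
  have hmul2 : (b + c - b) * d = c * d := by congr 1; omega
  rw [hmul2] at hsplit
  rw [hmul]
  omega

end more
section final
variable {V : Type*} {d : ℕ} {T : SimpleGraph V} {D : Finset V} {x : V}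

lemma mem_residualBoundary' :
    x ∈ residualBoundary T D ↔ x ∈ innerBoundary T D ∧ 2 ≤ degIn T D x := by
  simp [residualBoundary]

lemma tau_le_card (hT : IsRegularTree T d) (hd : 2 ≤ d) (hD : IsGraphDomain T D)
    (h2 : 2 ≤ D.card) : tauD T D ≤ D.card - 2 := by
  classical
  have h1 : tauD T D ≤ ∑ x ∈ D, (degIn T D x - 1) :=
    Finset.sum_le_sum_of_subset (innerBoundary_subset T D)
  have h3 : ∑ x ∈ D, degIn T D x = (∑ x ∈ D, (degIn T D x - 1)) + D.card := by
    calc ∑ x ∈ D, degIn T D x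
        = ∑ x ∈ D, ((degIn T D x - 1) + 1) :=
          Finset.sum_congr rfl (fun z hz => by have := degIn_pos hD h2 hz; omega)
      _ = (∑ x ∈ D, (degIn T D x - 1)) + D.card := by
          rw [Finset.sum_add_distrib, Finset.sum_const, smul_eq_mul, mul_one]
  rw [sum_degIn hT hD] at h3
  omega

lemma tau_le_res (hT : IsRegularTree T d) (hd : 2 ≤ d) (hD : IsGraphDomain T D)
    (h2 : 2 ≤ D.card) (hR : (residualBoundary T D).card ≤ 1) :
    tauD T D ≤ d - 2 := by
  classical
  have hsub : residualBoundary T D ⊆ innerBoundary T D :=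
    fun z hz => (mem_residualBoundary'.mp hz).1
  have h1 : tauD T D = ∑ x ∈ residualBoundary T D, (degIn T D x - 1) := by
    refine (Finset.sum_subset hsub (fun z hz hnz => ?_)).symm
    have : ¬ 2 ≤ degIn T D z := fun h => hnz (mem_residualBoundary'.mpr ⟨hz, h⟩)
    omega
  have h2' : ∑ x ∈ residualBoundary T D, (degIn T D x - 1)
      ≤ ∑ _x ∈ residualBoundary T D, (d - 2) := by
    refine Finset.sum_le_sum (fun z hz => ?_)
    have hlt : degIn T D z < d := ((mem_innerBoundary_iff hT hd).mp (hsub hz)).2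
    omega
  rw [Finset.sum_const, smul_eq_mul] at h2'
  have : (residualBoundary T D).card * (d - 2) ≤ 1 * (d - 2) :=
    Nat.mul_le_mul_right _ hR
  omega

lemma boundary_card_le (hT : IsRegularTree T d) (hd : 2 ≤ d)
    {D' : Finset V} (hD : IsGraphDomain T D) (hD' : IsGraphDomain T D')
    (h2 : 2 ≤ D.card) (hcard : D'.card = D.card) (htau : tauD T D ≤ d - 2) :
    (innerBoundary T D).card ≤ (innerBoundary T D').card := by
  have h2' : 2 ≤ D'.card := by omega
  have k1 := key_identity hT hd hD h2
  have k2 := key_identity hT hd hD' h2'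
  rw [hcard] at k2
  by_contra hlt
  push_neg at hlt
  set b := (innerBoundary T D).card
  set b' := (innerBoundary T D').card
  have hz1 : (tauD T D : ℤ) + b + D.card * d = 2 * ((D.card : ℤ) - 1) + b * d := by
    have := congrArg (fun n : ℕ => (n : ℤ)) k1
    push_cast [Nat.cast_sub (by omega : 1 ≤ D.card)] at this
    linarith
  have hz2 : (tauD T D' : ℤ) + b' + D.card * d = 2 * ((D.card : ℤ) - 1) + b' * d := by
    have := congrArg (fun n : ℕ => (n : ℤ)) k2
    push_cast [Nat.cast_sub (by omega : 1 ≤ D.card)] at this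
    linarith
  have htz : (tauD T D : ℤ) ≤ (d : ℤ) - 2 := by
    have := htau
    omega
  have hb : (b' : ℤ) + 1 ≤ b := by exact_mod_cast hlt
  have hd' : (2 : ℤ) ≤ d := by exact_mod_cast hd
  have ht' : (0 : ℤ) ≤ (tauD T D' : ℤ) := by positivity
  nlinarith [mul_nonneg (by linarith : (0:ℤ) ≤ (b : ℤ) - b' - 1) (by linarith : (0:ℤ) ≤ (d : ℤ) - 1)]

lemma boundary_card_one (hT : IsRegularTree T d) (hd : 2 ≤ d)
    (h1 : D.card = 1) : (innerBoundary T D).card = 1 := by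
  classical
  obtain ⟨a, rfl⟩ := Finset.card_eq_one.mp h1
  have hdeg : degIn T {a} a = 0 := by
    rw [degIn_def]
    simp [Finset.filter_singleton, T.irrefl]
  have hmem : a ∈ innerBoundary T {a} :=
    (mem_innerBoundary_iff hT hd).mpr ⟨Finset.mem_singleton_self a, by omega⟩
  have hsub := innerBoundary_subset T ({a} : Finset V)
  have := Finset.card_le_card hsub
  have hpos := Finset.card_pos.mpr ⟨a, hmem⟩
  simp only [Finset.card_singleton] at this
  omega

end final

/-- (a) Every domain of size at most `d` is optimal; (b) every domain with `|D| ≥ 2`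
and `|R(D)| ≤ 1` (in particular every full domain) is optimal. -/
theorem stmt_11 {V : Type*} (d : ℕ) (hd : 2 ≤ d) (T : SimpleGraph V)
    (hT : IsRegularTree T d) (D : Finset V) (hD : IsGraphDomain T D) :
    (D.card ≤ d → IsOptimal T D) ∧
    (2 ≤ D.card → (residualBoundary T D).card ≤ 1 → IsOptimal T D) := by
  constructor
  · intro hle D' hD' hcard
    rcases Nat.lt_or_ge D.card 2 with h1 | h2
    · have hc1 : D.card = 1 := by
        have := Finset.card_pos.mpr hD.1
        omega
      rw [boundary_card_one hT hd hc1, boundary_card_one hT hd (by omega : D'.card = 1)]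
    · exact boundary_card_le hT hd hD hD' h2 hcard
        (by have := tau_le_card hT hd hD h2; omega)
  · intro h2 hR D' hD' hcard
    exact boundary_card_le hT hd hD hD' h2 hcard (tau_le_res hT hd hD h2 hR)
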